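/- The Gini index is subadditive: for probability vectors p and q on Fin d and reals λ₁, λ₂ ≥ 0 with λ₁ + λ₂ = 1, G(λ₁·p + λ₂·q) ≤ λ₁·G(p) + λ₂·G(q). -/

import Mathlib

/-!
The sorted Lorenz value `L(p, ℓ)` is the smallest sum of `ℓ + 1` entries of `p`, hence at most
`∑_{k ≤ ℓ} p (σ k)` for every permutation `σ`, and the latter is linear in `p`. Taking for `σ` the
permutation used for the mixture gives `λ₁ L(p, ℓ) + λ₂ L(q, ℓ) ≤ L(λ₁ p + λ₂ q, ℓ)`, and `G` is a
decreasing affine function of `∑ ℓ, L(·, ℓ)`.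
-/

/-- A probability vector on `Fin d`: nonnegative entries summing to 1. -/
def IsProbVec {d : ℕ} (p : Fin d → ℝ) : Prop :=
  (∀ r, 0 ≤ p r) ∧ ∑ r, p r = 1

/-- `π` is a sorting permutation for `p`: it arranges the values of `p` in ascending order. -/
def IsSortingPerm {d : ℕ} (p : Fin d → ℝ) (π : Equiv.Perm (Fin d)) : Prop :=
  ∀ k l : Fin d, k ≤ l → p (π k) ≤ p (π l)

/-- The Lorenz values of `p` computed with the sorting permutation `π`:
`L(p, ℓ) = ∑_{k=0}^{ℓ} p (π k)`. -/
def lorenz {d : ℕ} (p : Fin d → ℝ) (π : Equiv.Perm (Fin d)) (ℓ : Fin d) : ℝ :=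
  ∑ k ∈ Finset.Iic ℓ, p (π k)

/-- The Gini index of `p`, computed with the sorting permutation `π`:
`G(p) = 1 − (2/(d+1)) · ∑_{ℓ=0}^{d−1} L(p, ℓ)`
(independent of the choice of sorting permutation). -/
noncomputable def gini {d : ℕ} (p : Fin d → ℝ) (π : Equiv.Perm (Fin d)) : ℝ :=
  1 - (2 / ((d : ℝ) + 1)) * ∑ ℓ : Fin d, lorenz p π ℓ


open Finset

theorem Finset.sum_le_sum_of_card_eq_of_le_of_le {ι M : Type*} [DecidableEq ι] [AddCommGroup M]
    [PartialOrder M] [IsOrderedAddMonoid M] {s t : Finset ι} {f : ι → M} (c : M) (hcard : #s = #t)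
    (hs : ∀ i ∈ s, f i ≤ c) (ht : ∀ i ∈ t, i ∉ s → c ≤ f i) :
    ∑ i ∈ s, f i ≤ ∑ i ∈ t, f i := by
  suffices ∑ i ∈ s, (f i - c) ≤ ∑ i ∈ t, (f i - c) by
    simpa only [sum_sub_distrib, sum_const, hcard, sub_le_sub_iff_right] using this
  calc ∑ i ∈ s, (f i - c)
      = ∑ i ∈ s ∩ t, (f i - c) + ∑ i ∈ s \ t, (f i - c) := (sum_inter_add_sum_sdiff _ _ _).symm
    _ ≤ ∑ i ∈ s ∩ t, (f i - c) :=
        add_le_of_nonpos_right <| sum_nonpos fun i hi ↦ sub_nonpos.2 <| hs i (mem_sdiff.1 hi).1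
    _ ≤ ∑ i ∈ t, (f i - c) :=
        sum_le_sum_of_subset_of_nonneg inter_subset_right fun i hit his ↦
          sub_nonneg.2 <| ht i hit fun hi ↦ his (mem_inter.2 ⟨hi, hit⟩)

lemma lorenz_eq_sum_map {d : ℕ} (p : Fin d → ℝ) (π : Equiv.Perm (Fin d)) (ℓ : Fin d) :
    lorenz p π ℓ = ∑ r ∈ (Iic ℓ).map π.toEmbedding, p r :=
  (sum_map (Iic ℓ) π.toEmbedding p).symm

lemma IsSortingPerm.lorenz_le {d : ℕ} {p : Fin d → ℝ} {π : Equiv.Perm (Fin d)}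
    (hπ : IsSortingPerm p π) (σ : Equiv.Perm (Fin d)) (ℓ : Fin d) :
    lorenz p π ℓ ≤ lorenz p σ ℓ := by
  rw [lorenz_eq_sum_map, lorenz_eq_sum_map]
  refine sum_le_sum_of_card_eq_of_le_of_le (p (π ℓ)) (by simp) ?_ ?_
  · intro r hr
    obtain ⟨k, hk, rfl⟩ := mem_map.1 hr
    exact hπ k ℓ (mem_Iic.1 hk)
  · intro r _ hr
    rw [← π.apply_symm_apply r]
    exact hπ ℓ _ (le_of_not_ge (by simpa using hr))

lemma lorenz_mul_add_mul {d : ℕ} (p q : Fin d → ℝ) (a b : ℝ) (σ : Equiv.Perm (Fin d)) (ℓ : Fin d) :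
    lorenz (fun r ↦ a * p r + b * q r) σ ℓ = a * lorenz p σ ℓ + b * lorenz q σ ℓ := by
  simp only [lorenz, sum_add_distrib, mul_sum]

theorem gini_subadditive_general {d : ℕ} (p q : Fin d → ℝ)
    (lam₁ lam₂ : ℝ) (h₁ : 0 ≤ lam₁) (h₂ : 0 ≤ lam₂) (hsum : lam₁ + lam₂ = 1)
    (πp πq πm : Equiv.Perm (Fin d))
    (hπp : IsSortingPerm p πp) (hπq : IsSortingPerm q πq) :
    gini (fun r => lam₁ * p r + lam₂ * q r) πm ≤ lam₁ * gini p πp + lam₂ * gini q πq := by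
  have hL : lam₁ * ∑ ℓ, lorenz p πp ℓ + lam₂ * ∑ ℓ, lorenz q πq ℓ ≤
      ∑ ℓ, lorenz (fun r ↦ lam₁ * p r + lam₂ * q r) πm ℓ := by
    simp only [lorenz_mul_add_mul, mul_sum, ← sum_add_distrib]
    gcongr with ℓ
    · exact hπp.lorenz_le πm ℓ
    · exact hπq.lorenz_le πm ℓ
  calc gini (fun r ↦ lam₁ * p r + lam₂ * q r) πm
      ≤ 1 - 2 / ((d : ℝ) + 1) * (lam₁ * ∑ ℓ, lorenz p πp ℓ + lam₂ * ∑ ℓ, lorenz q πq ℓ) := by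
        unfold gini; gcongr
    _ = lam₁ * gini p πp + lam₂ * gini q πq := by
        unfold gini; linear_combination -hsum

/-- The Gini index is subadditive: for probability vectors `p` and `q` on `Fin d`
and reals `λ₁, λ₂ ≥ 0` with `λ₁ + λ₂ = 1`, `G(λ₁·p + λ₂·q) ≤ λ₁·G(p) + λ₂·G(q)`
(with the Gini index of each vector computed via any sorting permutation for it). -/
theorem gini_subadditive {d : ℕ} (hd : 1 ≤ d) (p q : Fin d → ℝ)
    (hp : IsProbVec p) (hq : IsProbVec q)
    (lam₁ lam₂ : ℝ) (h₁ : 0 ≤ lam₁) (h₂ : 0 ≤ lam₂) (hsum : lam₁ + lam₂ = 1)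
    (πp πq πm : Equiv.Perm (Fin d))
    (hπp : IsSortingPerm p πp) (hπq : IsSortingPerm q πq)
    (hπm : IsSortingPerm (fun r => lam₁ * p r + lam₂ * q r) πm) :
    gini (fun r => lam₁ * p r + lam₂ * q r) πm ≤ lam₁ * gini p πp + lam₂ * gini q πq :=
  gini_subadditive_general p q lam₁ lam₂ h₁ h₂ hsum πp πq πm hπp hπq
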